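/- The function g(ρ) = 2ρφ(ρ)/(2Φ(ρ)-1) is strictly decreasing on (0,∞): for all 0 < ρ < ρ', g(ρ') < g(ρ). Consequently, for fixed η > 0, the variance η²(1 - g(ρ)) of the symmetric doubly truncated normal distribution is monotone: if 0 < ρ ≤ ρ' then η²(1 - g(ρ)) ≤ η²(1 - g(ρ')). -/

import Mathlib

/-!
Writing `D = 2Φ - 1`, one has `D' = 2φ` and `φ'(x) = -xφ(x)`, so
`g' = 2φ · ((1 - x²) D - 2xφ) / D²`. The bracket vanishes at `0` and has derivative
`-2x D(x) < 0`, hence it is negative on `(0, ∞)`, and so is `g'`.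
-/

open MeasureTheory Real Set Filter

/-- The standard normal density `φ(x) = (2π)^(-1/2) exp(-x²/2)`. -/
noncomputable def stdNormalPDF (x : ℝ) : ℝ :=
  (Real.sqrt (2 * Real.pi))⁻¹ * Real.exp (-x ^ 2 / 2)

/-- The standard normal CDF `Φ(x) = ∫_{-∞}^x φ(t) dt`. -/
noncomputable def stdNormalCDF (x : ℝ) : ℝ :=
  ∫ t in Set.Iic x, stdNormalPDF t

/-- The symmetric doubly truncated normal (SDTN) density with location `μ`, scale `η`
and truncation parameter `ρ`. -/
noncomputable def sdtnPDF (μ η ρ : ℝ) (x : ℝ) : ℝ :=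
  if x ∈ Set.Icc (μ - ρ * η) (μ + ρ * η) then
    stdNormalPDF ((x - μ) / η) / (η * (2 * stdNormalCDF ρ - 1))
  else 0

open ProbabilityTheory

lemma stdNormalPDF_eq_gaussianPDFReal : stdNormalPDF = gaussianPDFReal 0 1 := by
  ext x
  simp [stdNormalPDF, gaussianPDFReal]

lemma stdNormalPDF_pos (x : ℝ) : 0 < stdNormalPDF x := by
  rw [stdNormalPDF_eq_gaussianPDFReal]
  exact gaussianPDFReal_pos _ _ _ one_ne_zero

lemma stdNormalPDF_neg (x : ℝ) : stdNormalPDF (-x) = stdNormalPDF x := by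
  simp [stdNormalPDF]

lemma integrable_stdNormalPDF : Integrable stdNormalPDF := by
  rw [stdNormalPDF_eq_gaussianPDFReal]
  exact integrable_gaussianPDFReal _ _

lemma integral_stdNormalPDF : ∫ x, stdNormalPDF x = 1 := by
  rw [stdNormalPDF_eq_gaussianPDFReal]
  exact integral_gaussianPDFReal_eq_one _ one_ne_zero

lemma continuous_stdNormalPDF : Continuous stdNormalPDF := by
  unfold stdNormalPDF
  fun_prop

lemma hasDerivAt_stdNormalPDF (x : ℝ) : HasDerivAt stdNormalPDF (-x * stdNormalPDF x) x := by
  refine ((((hasDerivAt_pow 2 x).neg.div_const 2).exp).const_mul (√(2 * π))⁻¹).congr_deriv ?_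
  simp only [stdNormalPDF, Pi.neg_apply]
  ring

lemma stdNormalCDF_sub (a b : ℝ) :
    stdNormalCDF b - stdNormalCDF a = ∫ t in a..b, stdNormalPDF t :=
  intervalIntegral.integral_Iic_sub_Iic integrable_stdNormalPDF.integrableOn
    integrable_stdNormalPDF.integrableOn

lemma hasDerivAt_stdNormalCDF (x : ℝ) : HasDerivAt stdNormalCDF (stdNormalPDF x) x := by
  have h : HasDerivAt (fun u ↦ ∫ t in (0 : ℝ)..u, stdNormalPDF t) (stdNormalPDF x) x :=
    intervalIntegral.integral_hasDerivAt_right integrable_stdNormalPDF.intervalIntegrable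
      (continuous_stdNormalPDF.stronglyMeasurableAtFilter _ _)
      continuous_stdNormalPDF.continuousAt
  have h_eq : stdNormalCDF = fun u ↦ stdNormalCDF 0 + ∫ t in (0 : ℝ)..u, stdNormalPDF t := by
    funext u
    rw [← stdNormalCDF_sub]
    ring
  rw [h_eq]
  exact h.const_add _

lemma stdNormalCDF_zero : stdNormalCDF 0 = 1 / 2 := by
  have h_symm : stdNormalCDF 0 = ∫ t in Ioi 0, stdNormalPDF t := by
    unfold stdNormalCDF
    simpa [stdNormalPDF_neg] using integral_comp_neg_Iic (0 : ℝ) stdNormalPDF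
  have h_total := intervalIntegral.integral_Iic_add_Ioi (b := 0)
    integrable_stdNormalPDF.integrableOn integrable_stdNormalPDF.integrableOn
  rw [integral_stdNormalPDF, ← h_symm] at h_total
  change stdNormalCDF 0 + stdNormalCDF 0 = 1 at h_total
  linarith

/-- The standard normal mass of `[-x, x]`, the denominator of `g`. -/
noncomputable def centralMass (x : ℝ) : ℝ := 2 * stdNormalCDF x - 1

lemma centralMass_zero : centralMass 0 = 0 := by
  simp [centralMass, stdNormalCDF_zero]

lemma centralMass_pos {x : ℝ} (hx : 0 < x) : 0 < centralMass x := by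
  have h_int : 0 < ∫ t in (0 : ℝ)..x, stdNormalPDF t :=
    intervalIntegral.intervalIntegral_pos_of_pos integrable_stdNormalPDF.intervalIntegrable
      stdNormalPDF_pos hx
  rw [← stdNormalCDF_sub, stdNormalCDF_zero] at h_int
  unfold centralMass
  linarith

lemma hasDerivAt_centralMass (x : ℝ) : HasDerivAt centralMass (2 * stdNormalPDF x) x :=
  ((hasDerivAt_stdNormalCDF x).const_mul 2).sub_const 1

noncomputable def sdtnG (x : ℝ) : ℝ := 2 * x * stdNormalPDF x / centralMass x

lemma one_sub_sq_mul_centralMass_lt {x : ℝ} (hx : 0 < x) :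
    (1 - x ^ 2) * centralMass x < 2 * x * stdNormalPDF x := by
  set h : ℝ → ℝ := fun y ↦ (1 - y ^ 2) * centralMass y - 2 * y * stdNormalPDF y
  have h_deriv (y : ℝ) : HasDerivAt h (-2 * y * centralMass y) y := by
    have := (((hasDerivAt_pow 2 y).const_sub 1).mul (hasDerivAt_centralMass y)).sub
      (((hasDerivAt_id y).const_mul 2).mul (hasDerivAt_stdNormalPDF y))
    refine this.congr_deriv ?_
    simp only [id, Nat.cast_ofNat]
    ring
  have h_anti : StrictAntiOn h (Ici 0) := by
    refine strictAntiOn_of_deriv_neg (convex_Ici 0)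
      (fun y _ ↦ (h_deriv y).continuousAt.continuousWithinAt) fun y hy ↦ ?_
    rw [interior_Ici] at hy
    rw [(h_deriv y).deriv]
    have := mul_pos hy (centralMass_pos hy)
    linarith
  have h_zero : h 0 = 0 := by simp [h, centralMass_zero]
  have := h_anti self_mem_Ici hx.le hx
  linarith

lemma hasDerivAt_sdtnG {x : ℝ} (hx : 0 < x) :
    HasDerivAt sdtnG (2 * stdNormalPDF x *
      ((1 - x ^ 2) * centralMass x - 2 * x * stdNormalPDF x) / centralMass x ^ 2) x := by
  have := (((hasDerivAt_id x).const_mul 2).mul (hasDerivAt_stdNormalPDF x)).div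
    (hasDerivAt_centralMass x) (centralMass_pos hx).ne'
  refine this.congr_deriv ?_
  simp only [id, Pi.mul_apply]
  ring

lemma strictAntiOn_sdtnG : StrictAntiOn sdtnG (Ioi 0) := by
  refine strictAntiOn_of_deriv_neg (convex_Ioi 0)
    (fun x hx ↦ (hasDerivAt_sdtnG hx).continuousAt.continuousWithinAt) fun x hx ↦ ?_
  rw [interior_Ioi] at hx
  rw [(hasDerivAt_sdtnG hx).deriv]
  have h_bracket := sub_neg.2 (one_sub_sq_mul_centralMass_lt hx)
  have h_pdf := stdNormalPDF_pos x
  exact div_neg_of_neg_of_pos (mul_neg_of_pos_of_neg (by positivity) h_bracket)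
    (pow_pos (centralMass_pos hx) 2)

theorem sdtn_g_strict_anti :
    (∀ ρ ρ' : ℝ, 0 < ρ → ρ < ρ' →
      2 * ρ' * stdNormalPDF ρ' / (2 * stdNormalCDF ρ' - 1) <
        2 * ρ * stdNormalPDF ρ / (2 * stdNormalCDF ρ - 1)) ∧
    ∀ (η ρ ρ' : ℝ), 0 < η → 0 < ρ → ρ ≤ ρ' →
      η ^ 2 * (1 - 2 * ρ * stdNormalPDF ρ / (2 * stdNormalCDF ρ - 1)) ≤
        η ^ 2 * (1 - 2 * ρ' * stdNormalPDF ρ' / (2 * stdNormalCDF ρ' - 1)) := by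
  refine ⟨fun ρ ρ' hρ hlt ↦ strictAntiOn_sdtnG hρ (hρ.trans hlt) hlt,
    fun η ρ ρ' _ hρ hle ↦ ?_⟩
  have : sdtnG ρ' ≤ sdtnG ρ := strictAntiOn_sdtnG.antitoneOn hρ (hρ.trans_le hle) hle
  exact mul_le_mul_of_nonneg_left (sub_le_sub_left this 1) (sq_nonneg η)
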